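/- arXiv:2307.00499 — 2 statements merged into one kernel-verified Lean document; each statement's English description precedes it below -/
import Mathlib

section
/- Let (a(n))_{n≥1} be a sequence of complex numbers with only finitely many a(n) nonzero, and let l be a positive integer. Then E|∑_{n≥1} a(n) f(n)/√n|^{2l} ≤ (∑_{n≥1} |a(n)|² τ_l(n)/n)^l. -/
/-!
Write `S = ∑ₙ cₙ f(n)` with `cₙ = a(n)/√n`. Complete multiplicativity turns `S^l` into
`∑_v c_{v₁}⋯c_{v_l} f(v₁⋯v_l)` over `l`-tuples `v`, and independence plus uniformity of the
`f(p)` give the orthogonality `E f(m) conj f(n) = [m = n]`. Hence `E|S|^{2l}` is the diagonal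
sum over pairs of tuples with equal products, which by AM–GM is at most
`∑_v |c_{v₁}⋯c_{v_l}|² τ_l(v₁⋯v_l)`. Finally `τ_l` is submultiplicative (every factorisation
of `mn` into `l` factors is the pointwise product of factorisations of `m` and of `n`), so
`τ_l(v₁⋯v_l) ≤ τ_l(v₁)⋯τ_l(v_l)` and the sum factorises as `(∑ₙ |cₙ|² τ_l(n))^l`.
-/

open MeasureTheory ProbabilityTheory Filter

/-- The uniform (Steinhaus) distribution on the complex unit circle, realized as the
pushforward of normalized Lebesgue measure on `(0, 2π]` under `θ ↦ exp(iθ)`. -/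
noncomputable def steinhausMeasure : Measure ℂ :=
  Measure.map (fun θ : ℝ => Complex.exp (Complex.I * θ))
    ((ENNReal.ofReal (2 * Real.pi))⁻¹ • volume.restrict (Set.Ioc 0 (2 * Real.pi)))

/-- `f : Ω → ℕ → ℂ` is a Steinhaus random multiplicative function w.r.t. `μ`:
each `f · n` is measurable, `f ω` is completely multiplicative (on positive integers),
the values at primes lie on the unit circle, are independent,
and each is uniformly distributed on the unit circle. -/
structure IsSteinhausRMF {Ω : Type*} [MeasurableSpace Ω] (μ : Measure Ω)
    (f : Ω → ℕ → ℂ) : Prop where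
  meas : ∀ n : ℕ, Measurable fun ω => f ω n
  map_one : ∀ ω, f ω 1 = 1
  map_mul : ∀ ω, ∀ m n : ℕ, 0 < m → 0 < n → f ω (m * n) = f ω m * f ω n
  norm_prime : ∀ ω, ∀ p : ℕ, p.Prime → ‖f ω p‖ = 1
  indep : iIndepFun (fun (p : {q : ℕ // q.Prime}) ω => f ω p.1) μ
  unif : ∀ p : ℕ, p.Prime → Measure.map (fun ω => f ω p) μ = steinhausMeasure

/-- The `l`-fold divisor function: `tauk l n = #{(a₁,…,a_l) : a₁⋯a_l = n}`
(tuples of positive integers, which for `n ≥ 1` necessarily lie in `[1,n]`). -/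
def tauk (l n : ℕ) : ℕ :=
  ((Fintype.piFinset fun _ : Fin l => Finset.Icc 1 n).filter fun v => ∏ i, v i = n).card

open Finset ComplexConjugate

theorem tauk_eq_card_finMulAntidiag (l n : ℕ) : tauk l n = #(Nat.finMulAntidiag l n) := by
  rw [tauk]
  congr 1
  ext v
  simp only [mem_filter, Fintype.mem_piFinset, mem_Icc, Nat.mem_finMulAntidiag]
  constructor
  · rintro ⟨hv, rfl⟩
    exact ⟨rfl, prod_ne_zero_iff.2 fun i _ => (Nat.one_le_iff_ne_zero.1 (hv i).1)⟩
  · rintro ⟨rfl, hv⟩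
    refine ⟨fun i => ⟨Nat.one_le_iff_ne_zero.2 fun h => hv ?_, ?_⟩, rfl⟩
    · exact prod_eq_zero (mem_univ i) h
    · exact Nat.le_of_dvd (Nat.pos_of_ne_zero hv) (dvd_prod_of_mem v (mem_univ i))

theorem Nat.finMulAntidiag_mul_subset_image (l m n : ℕ) :
    Nat.finMulAntidiag l (m * n) ⊆
      (Nat.finMulAntidiag l m ×ˢ Nat.finMulAntidiag l n).image fun uw => uw.1 * uw.2 := by
  induction l generalizing m n with
  | zero =>
    intro v hv
    obtain ⟨hmn, -⟩ := Nat.mem_finMulAntidiag.1 hv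
    obtain ⟨rfl, rfl⟩ : m = 1 ∧ n = 1 := by simpa using hmn.symm
    simpa [Nat.finMulAntidiag_one] using Subsingleton.elim _ _
  | succ l ih =>
    intro v hv
    obtain ⟨hv, hmn⟩ := Nat.mem_finMulAntidiag.1 hv
    rw [Fin.prod_univ_succ] at hv
    -- split the first factor `v 0 ∣ m * n` as `k₁ * k₂` with `k₁ ∣ m`, `k₂ ∣ n`, then recurse
    obtain ⟨k₁, k₂, ⟨m', rfl⟩, ⟨n', rfl⟩, hk⟩ := dvd_mul.1 (Dvd.intro _ hv)
    obtain ⟨hm, hn⟩ := mul_ne_zero_iff.1 hmn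
    have hk₀ : k₁ * k₂ ≠ 0 := mul_ne_zero (left_ne_zero_of_mul hm) (left_ne_zero_of_mul hn)
    have htail : ∏ i, Fin.tail v i = m' * n' := by
      refine Nat.eq_of_mul_eq_mul_left (Nat.pos_of_ne_zero hk₀) ?_
      calc k₁ * k₂ * ∏ i, Fin.tail v i = v 0 * ∏ i : Fin l, v i.succ := by rw [hk]; rfl
        _ = k₁ * k₂ * (m' * n') := by rw [hv]; ring
    obtain ⟨⟨u, w⟩, huw, hvuw⟩ := mem_image.1 <|
      ih m' n' (Nat.mem_finMulAntidiag.2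
        ⟨htail, mul_ne_zero (right_ne_zero_of_mul hm) (right_ne_zero_of_mul hn)⟩)
    simp only [mem_product, Nat.mem_finMulAntidiag] at huw
    refine mem_image.2 ⟨(Fin.cons k₁ u, Fin.cons k₂ w), ?_, ?_⟩
    · simp [Fin.prod_univ_succ, huw.1.1, huw.2.1, hm, hn]
    · rw [← Fin.cons_self_tail v, ← hvuw, hk]
      ext i
      exact Fin.cases rfl (fun j => rfl) i

theorem tauk_mul_le (l m n : ℕ) : tauk l (m * n) ≤ tauk l m * tauk l n := by
  simp only [tauk_eq_card_finMulAntidiag, ← card_product]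
  exact (card_le_card (Nat.finMulAntidiag_mul_subset_image l m n)).trans card_image_le

theorem tauk_prod_le {ι : Type*} (l : ℕ) (s : Finset ι) (g : ι → ℕ) :
    tauk l (∏ i ∈ s, g i) ≤ ∏ i ∈ s, tauk l (g i) :=
  le_prod_of_submultiplicative (tauk l)
    (by simp [tauk_eq_card_finMulAntidiag, Nat.finMulAntidiag_one]) (tauk_mul_le l) s g

theorem card_filter_prod_eq_le_tauk {l k : ℕ} (hk : k ≠ 0) (T : Finset ℕ) :
    #{w ∈ Fintype.piFinset fun _ : Fin l => T | ∏ i, w i = k} ≤ tauk l k := by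
  rw [tauk_eq_card_finMulAntidiag]
  exact card_le_card fun w hw => Nat.mem_finMulAntidiag.2 ⟨(mem_filter.1 hw).2, hk⟩

theorem sum_piFinset_prod_mul_tauk_le (l : ℕ) (T : Finset ℕ) {x : ℕ → ℝ} (hx : ∀ n, 0 ≤ x n) :
    ∑ v ∈ Fintype.piFinset fun _ : Fin l => T, (∏ i, x (v i)) * tauk l (∏ i, v i) ≤
      (∑ n ∈ T, x n * tauk l n) ^ l := by
  rw [← Fin.prod_const, prod_univ_sum]
  gcongr with v
  rw [prod_mul_distrib]
  gcongr
  · exact prod_nonneg fun i _ => hx _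
  · exact_mod_cast tauk_prod_le l univ v

theorem re_sum_sum_ite_mul_conj_le {ι κ : Type*} [DecidableEq κ] (s : Finset ι) (c : ι → ℂ)
    (n : ι → κ) :
    (∑ i ∈ s, ∑ j ∈ s, if n i = n j then c i * conj (c j) else 0).re ≤
      ∑ i ∈ s, ‖c i‖ ^ 2 * #{j ∈ s | n j = n i} := by
  set x : ι → ℝ := fun i => ‖c i‖ ^ 2
  have hswap : ∑ i ∈ s, ∑ j ∈ s, (if n i = n j then x j else 0) =
      ∑ i ∈ s, ∑ j ∈ s, if n i = n j then x i else 0 := by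
    rw [sum_comm]
    simp only [eq_comm]
  calc (∑ i ∈ s, ∑ j ∈ s, if n i = n j then c i * conj (c j) else 0).re
      = ∑ i ∈ s, ∑ j ∈ s, if n i = n j then (c i * conj (c j)).re else 0 := by
        simp only [Complex.re_sum, apply_ite Complex.re, Complex.zero_re]
    _ ≤ ∑ i ∈ s, ∑ j ∈ s, if n i = n j then (x i + x j) / 2 else 0 := by
        gcongr with i _ j _
        split_ifs
        · calc (c i * conj (c j)).re ≤ ‖c i‖ * ‖c j‖ := by
                simpa using Complex.re_le_norm (c i * conj (c j))
            _ ≤ (x i + x j) / 2 := by nlinarith [sq_nonneg (‖c i‖ - ‖c j‖)]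
        · rfl
    _ = ∑ i ∈ s, ∑ j ∈ s, if n i = n j then x i else 0 := by
        have hsplit : ∀ i j, (if n i = n j then (x i + x j) / 2 else 0) =
            ((if n i = n j then x i else 0) + if n i = n j then x j else 0) / 2 := by
          intro i j; split_ifs <;> ring
        simp only [hsplit, ← sum_div, sum_add_distrib, hswap]
        ring
    _ = ∑ i ∈ s, ‖c i‖ ^ 2 * #{j ∈ s | n j = n i} := by
        refine sum_congr rfl fun i _ => ?_
        rw [← sum_filter, sum_const, nsmul_eq_mul, mul_comm]
        simp only [x, eq_comm]

theorem integral_exp_int_mul_I (k : ℤ) :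
    ∫ θ in (0 : ℝ)..2 * Real.pi, Complex.exp (k * Complex.I * θ) =
      if k = 0 then (2 * Real.pi : ℝ) else 0 := by
  split_ifs with hk
  · simp [hk]
  · have hc : (k : ℂ) * Complex.I ≠ 0 := mul_ne_zero (by exact_mod_cast hk) Complex.I_ne_zero
    have hperiod : Complex.exp (k * Complex.I * (2 * Real.pi)) = 1 := by
      rw [← Complex.exp_int_mul_two_pi_mul_I k]; ring_nf
    rw [integral_exp_mul_complex hc]
    push_cast
    simp [hperiod]

theorem integral_steinhausMeasure_pow_mul_conj_pow (a b : ℕ) :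
    ∫ z, z ^ a * conj z ^ b ∂steinhausMeasure = if a = b then 1 else 0 := by
  have hexp : ∀ θ : ℝ, Complex.exp (Complex.I * θ) ^ a * conj (Complex.exp (Complex.I * θ)) ^ b
      = Complex.exp (((a - b : ℤ) : ℂ) * Complex.I * θ) := by
    intro θ
    rw [← Complex.exp_nat_mul, ← Complex.exp_conj, ← Complex.exp_nat_mul, ← Complex.exp_add]
    simp only [map_mul, Complex.conj_I, Complex.conj_ofReal]
    push_cast; ring_nf
  rw [steinhausMeasure, integral_map (by fun_prop) (by fun_prop), integral_smul_measure,
    ← intervalIntegral.integral_of_le Real.two_pi_pos.le]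
  simp only [hexp, integral_exp_int_mul_I, sub_eq_zero, Nat.cast_inj]
  split_ifs
  · rw [ENNReal.toReal_inv, ENNReal.toReal_ofReal Real.two_pi_pos.le, Complex.real_smul,
      ← Complex.ofReal_mul, inv_mul_cancel₀ Real.two_pi_pos.ne', Complex.ofReal_one]
  · simp

namespace IsSteinhausRMF

variable {Ω : Type*} [MeasurableSpace Ω] {μ : Measure Ω} {f : Ω → ℕ → ℂ}

theorem apply_prod (hf : IsSteinhausRMF μ f) {ι : Type*} (ω : Ω) (s : Finset ι) (v : ι → ℕ)
    (hv : ∀ i ∈ s, v i ≠ 0) : f ω (∏ i ∈ s, v i) = ∏ i ∈ s, f ω (v i) := by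
  classical
  induction s using Finset.induction_on with
  | empty => simpa using hf.map_one ω
  | insert a s ha ih =>
    have hv' : ∀ i ∈ s, v i ≠ 0 := fun i hi => hv i (mem_insert_of_mem hi)
    rw [prod_insert ha, prod_insert ha,
      hf.map_mul ω _ _ (Nat.pos_of_ne_zero (hv a (mem_insert_self a s)))
        (Nat.pos_of_ne_zero (prod_ne_zero_iff.2 hv')), ih hv']

theorem apply_eq_prod_pow_factorization (hf : IsSteinhausRMF μ f) (ω : Ω) {n : ℕ} (hn : n ≠ 0)
    {Q : Finset ℕ} (hQ : ∀ p ∈ Q, p.Prime) (hnQ : n.primeFactors ⊆ Q) :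
    f ω n = ∏ p ∈ Q, f ω p ^ n.factorization p := by
  conv_lhs => rw [← Nat.prod_factorization_pow_eq_self hn]
  rw [Finsupp.prod_of_support_subset (s := Q) _ (by rwa [Nat.support_factorization]) _ (by simp),
    hf.apply_prod ω _ _ fun p hp => pow_ne_zero _ (hQ p hp).ne_zero]
  refine prod_congr rfl fun p hp => ?_
  simpa using hf.apply_prod ω (range (n.factorization p)) (fun _ => p) fun _ _ => (hQ p hp).ne_zero

theorem norm_apply (hf : IsSteinhausRMF μ f) (ω : Ω) {n : ℕ} (hn : n ≠ 0) : ‖f ω n‖ = 1 := by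
  rw [hf.apply_eq_prod_pow_factorization ω hn (fun p => Nat.prime_of_mem_primeFactors) subset_rfl]
  simp only [norm_prod, norm_pow]
  exact prod_eq_one fun p hp => by
    rw [hf.norm_prime ω p (Nat.prime_of_mem_primeFactors hp), one_pow]

theorem integral_prod_pow_mul_conj_pow (hf : IsSteinhausRMF μ f) {Q : Finset ℕ}
    (hQ : ∀ p ∈ Q, p.Prime) (α β : ℕ → ℕ) :
    ∫ ω, ∏ p ∈ Q, f ω p ^ α p * conj (f ω p) ^ β p ∂μ = if ∀ p ∈ Q, α p = β p then 1 else 0 := by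
  have hindep : iIndepFun (fun (p : Q) ω => f ω p) μ :=
    hf.indep.precomp (g := fun p : Q => ⟨p, hQ p p.2⟩) fun p q h => Subtype.ext (by simpa using h)
  calc ∫ ω, ∏ p ∈ Q, f ω p ^ α p * conj (f ω p) ^ β p ∂μ
      = ∫ ω, ∏ p : Q, f ω p ^ α p * conj (f ω p) ^ β p ∂μ := by
        congr with ω
        exact (prod_coe_sort Q _).symm
    _ = ∏ p : Q, ∫ ω, f ω p ^ α p * conj (f ω p) ^ β p ∂μ :=
      hindep.integral_fun_prod_comp (f := fun (p : Q) z => z ^ α p * conj z ^ β p)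
        (fun p => (hf.meas p).aemeasurable) fun p => by fun_prop
    _ = ∏ p : Q, if α p = β p then 1 else 0 := by
      refine prod_congr rfl fun p _ => ?_
      rw [← integral_steinhausMeasure_pow_mul_conj_pow, ← hf.unif p (hQ p p.2),
        integral_map (hf.meas p).aemeasurable (by fun_prop)]
    _ = _ := by rw [prod_coe_sort Q fun p => if α p = β p then (1 : ℂ) else 0, prod_boole]

theorem integral_mul_conj (hf : IsSteinhausRMF μ f) {m n : ℕ} (hm : m ≠ 0) (hn : n ≠ 0) :
    ∫ ω, f ω m * conj (f ω n) ∂μ = if m = n then 1 else 0 := by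
  set Q := m.primeFactors ∪ n.primeFactors
  have hQ : ∀ p ∈ Q, p.Prime := by
    simp only [Q, mem_union]
    rintro p (hp | hp) <;> exact Nat.prime_of_mem_primeFactors hp
  have hfactor : ∀ ω, f ω m * conj (f ω n) =
      ∏ p ∈ Q, f ω p ^ m.factorization p * conj (f ω p) ^ n.factorization p := by
    intro ω
    rw [hf.apply_eq_prod_pow_factorization ω hm hQ subset_union_left,
      hf.apply_eq_prod_pow_factorization ω hn hQ subset_union_right, map_prod,
      ← prod_mul_distrib]
    simp only [map_pow]
  have hfactorization : (∀ p ∈ Q, m.factorization p = n.factorization p) ↔ m = n := by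
    refine ⟨fun h => Nat.eq_of_factorization_eq hm hn fun p => ?_, fun h _ _ => h ▸ rfl⟩
    by_cases hp : p ∈ Q
    · exact h p hp
    · simp only [Q, mem_union, not_or, ← Nat.support_factorization, Finsupp.mem_support_iff,
        not_not] at hp
      rw [hp.1, hp.2]
  simp_rw [hfactor, hf.integral_prod_pow_mul_conj_pow hQ, hfactorization]

theorem integral_norm_sum_sq (hf : IsSteinhausRMF μ f) {ι : Type*} (s : Finset ι) (c : ι → ℂ)
    (n : ι → ℕ) (hn : ∀ i ∈ s, n i ≠ 0) :
    ∫ ω, ‖∑ i ∈ s, c i * f ω (n i)‖ ^ 2 ∂μ =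
      (∑ i ∈ s, ∑ j ∈ s, if n i = n j then c i * conj (c j) else 0).re := by
  have := hf.indep.isProbabilityMeasure
  have hint : ∀ i ∈ s, ∀ j ∈ s,
      Integrable (fun ω => c i * conj (c j) * (f ω (n i) * conj (f ω (n j)))) μ := by
    intro i hi j hj
    have hmeas := (hf.meas (n i)).mul (Complex.continuous_conj.measurable.comp (hf.meas (n j)))
    refine (Integrable.of_bound hmeas.aestronglyMeasurable 1 (ae_of_all _ fun ω => ?_)).const_mul _
    simp [hf.norm_apply ω (hn i hi), hf.norm_apply ω (hn j hj)]
  rw [← Complex.ofReal_re (∫ ω, _ ∂μ), ← integral_complex_ofReal]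
  congr 1
  calc ∫ ω, ((‖∑ i ∈ s, c i * f ω (n i)‖ ^ 2 : ℝ) : ℂ) ∂μ
      = ∫ ω, ∑ i ∈ s, ∑ j ∈ s, c i * conj (c j) * (f ω (n i) * conj (f ω (n j))) ∂μ := by
        congr with ω
        rw [Complex.ofReal_pow, ← Complex.mul_conj', map_sum, sum_mul_sum]
        simp only [_root_.map_mul, mul_mul_mul_comm]
    _ = ∑ i ∈ s, ∑ j ∈ s, c i * conj (c j) * ∫ ω, f ω (n i) * conj (f ω (n j)) ∂μ := by
        rw [integral_finsetSum _ fun i hi => integrable_finsetSum _ (hint i hi)]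
        refine sum_congr rfl fun i hi => ?_
        rw [integral_finsetSum _ (hint i hi)]
        simp only [integral_const_mul]
    _ = _ := by
        refine sum_congr rfl fun i hi => sum_congr rfl fun j hj => ?_
        rw [hf.integral_mul_conj (hn i hi) (hn j hj)]
        split_ifs <;> simp

theorem integral_norm_sum_sq_le (hf : IsSteinhausRMF μ f) {ι : Type*} (s : Finset ι) (c : ι → ℂ)
    (n : ι → ℕ) (hn : ∀ i ∈ s, n i ≠ 0) :
    ∫ ω, ‖∑ i ∈ s, c i * f ω (n i)‖ ^ 2 ∂μ ≤ ∑ i ∈ s, ‖c i‖ ^ 2 * #{j ∈ s | n j = n i} :=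
  hf.integral_norm_sum_sq s c n hn ▸ re_sum_sum_ite_mul_conj_le s c n

theorem sum_mul_apply_pow (hf : IsSteinhausRMF μ f) (ω : Ω) {T : Finset ℕ} (hT : 0 ∉ T)
    (c : ℕ → ℂ) (l : ℕ) :
    (∑ n ∈ T, c n * f ω n) ^ l =
      ∑ v ∈ Fintype.piFinset fun _ : Fin l => T, (∏ i, c (v i)) * f ω (∏ i, v i) := by
  rw [← Fin.prod_const, prod_univ_sum]
  refine sum_congr rfl fun v hv => ?_
  rw [prod_mul_distrib, hf.apply_prod ω _ _ fun i _ => ?_]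
  exact ne_of_mem_of_not_mem (Fintype.mem_piFinset.1 hv i) hT

theorem integral_norm_sum_pow_le (hf : IsSteinhausRMF μ f) {T : Finset ℕ} (hT : 0 ∉ T)
    (c : ℕ → ℂ) (l : ℕ) :
    ∫ ω, ‖∑ n ∈ T, c n * f ω n‖ ^ (2 * l) ∂μ ≤ (∑ n ∈ T, ‖c n‖ ^ 2 * tauk l n) ^ l := by
  set V := Fintype.piFinset fun _ : Fin l => T
  have hV : ∀ v ∈ V, ∏ i, v i ≠ 0 := fun v hv =>
    prod_ne_zero_iff.2 fun i _ => ne_of_mem_of_not_mem (Fintype.mem_piFinset.1 hv i) hT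
  calc _ = ∫ ω, ‖∑ v ∈ V, (∏ i, c (v i)) * f ω (∏ i, v i)‖ ^ 2 ∂μ := by
        congr with ω
        rw [pow_mul', ← norm_pow, hf.sum_mul_apply_pow _ hT]
    _ ≤ ∑ v ∈ V, ‖∏ i, c (v i)‖ ^ 2 * #{w ∈ V | ∏ i, w i = ∏ i, v i} :=
        hf.integral_norm_sum_sq_le _ _ _ hV
    _ ≤ ∑ v ∈ V, (∏ i, ‖c (v i)‖ ^ 2) * tauk l (∏ i, v i) := by
        refine sum_le_sum fun v hv => ?_
        rw [norm_prod, ← prod_pow]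
        gcongr
        exact_mod_cast card_filter_prod_eq_le_tauk (hV v hv) T
    _ ≤ (∑ n ∈ T, ‖c n‖ ^ 2 * tauk l n) ^ l :=
        sum_piFinset_prod_mul_tauk_le l T (x := fun n => ‖c n‖ ^ 2) fun _ => sq_nonneg _

end IsSteinhausRMF

theorem steinhaus_moment_bound_general {Ω : Type*} [MeasurableSpace Ω]
    (μ : Measure Ω) (f : Ω → ℕ → ℂ)
    (hf : IsSteinhausRMF μ f) (a : ℕ → ℂ) (ha : (Function.support a).Finite)
    (ha0 : a 0 = 0) (l : ℕ) :
    ∫ ω, ‖∑' n : ℕ, a n * f ω n / (Real.sqrt n : ℂ)‖ ^ (2 * l) ∂μ ≤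
      (∑' n : ℕ, ‖a n‖ ^ 2 * (tauk l n : ℝ) / n) ^ l := by
  set T := ha.toFinset
  have hT : 0 ∉ T := by simpa [T] using ha0
  set c : ℕ → ℂ := fun n => a n / (Real.sqrt n : ℂ)
  have hsum : ∀ ω, ∑' n, a n * f ω n / (Real.sqrt n : ℂ) = ∑ n ∈ T, c n * f ω n := fun ω =>
    (tsum_eq_sum fun n hn => by simp_all [T]).trans (sum_congr rfl fun n _ => by ring)
  have hweight : ∑' n, ‖a n‖ ^ 2 * (tauk l n : ℝ) / n = ∑ n ∈ T, ‖c n‖ ^ 2 * tauk l n := by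
    refine (tsum_eq_sum fun n hn => by simp_all [T]).trans (sum_congr rfl fun n _ => ?_)
    rw [norm_div, Complex.norm_real, Real.norm_of_nonneg (Real.sqrt_nonneg _), div_pow,
      Real.sq_sqrt n.cast_nonneg]
    ring
  simp_rw [hsum, hweight]
  exact hf.integral_norm_sum_pow_le hT c l

/-- **Lemma 1.** If `(a(n))_{n ≥ 1}` has finitely many nonzero terms and `l ≥ 1`, then
`E|∑_{n≥1} a(n) f(n)/√n|^{2l} ≤ (∑_{n≥1} |a(n)|² τ_l(n)/n)^l`. -/
theorem steinhaus_moment_bound {Ω : Type*} [MeasurableSpace Ω]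
    (μ : Measure Ω) [IsProbabilityMeasure μ] (f : Ω → ℕ → ℂ)
    (hf : IsSteinhausRMF μ f) (a : ℕ → ℂ) (ha : (Function.support a).Finite)
    (ha0 : a 0 = 0) (l : ℕ) (hl : 0 < l) :
    ∫ ω, ‖∑' n : ℕ, a n * f ω n / (Real.sqrt n : ℂ)‖ ^ (2 * l) ∂μ ≤
      (∑' n : ℕ, ‖a n‖ ^ 2 * (tauk l n : ℝ) / n) ^ l :=
  steinhaus_moment_bound_general μ f hf a ha ha0 l
end

section
/- For any ε > 0 there exists λ₀ > 1 such that for every λ ≥ λ₀ the following holds: setting T_k = exp(exp(λ^k)) and σ_k = log log T_k / log T_k for integers k ≥ 1, almost surely for all sufficiently large k one has ∑_{p ≤ T_{k−1}} [ 2 Re(f(p)) (log T_k) sin(log p / (2 log T_k)) / (p^{1/2 + σ_k} log p) + Re(f(p)²) / (2 p^{1 + 2σ_k}) ] ≤ ε √(log₂ T_k · log₄ T_k), where the sum runs over primes p ≤ T_{k−1}. -/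
/-!
Write the summand at `p` as `a p * Re f(p) + b p * Re f(p)²`; since `sin t ≤ t` and `σ ≥ 0`,
`|a p| + |b p| ≤ 3 / (2 √p)`. These summands are independent, bounded and of mean zero
(`∫ cos θ = ∫ cos 2θ = 0` over a period), so Hoeffding's inequality bounds the probability that
the sum over `p ≤ T_k` exceeds `x = ε √(λ^(k+1) log((k+1) log λ))` by `exp (-x² / 2V)`, where
`V = 9/4 ∑_{p ≤ T_k} 1/p ≤ 9/4 (9 + 4 log log T_k) = 9/4 (9 + 4 λ^k)` by a dyadic application of
Chebyshev's bound `θ(x) ≤ x log 4`. For `λ ≥ 120 / ε²` this probability is at most `(k+1)⁻²`, and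
Borel–Cantelli concludes.
-/

open MeasureTheory ProbabilityTheory Filter

/-- Iterated logarithm: `llog x = log log x`. -/
noncomputable def llog (x : ℝ) : ℝ := Real.log (Real.log x)

/-- Iterated logarithm: `llllog x = log log log log x`. -/
noncomputable def llllog (x : ℝ) : ℝ := Real.log (Real.log (Real.log (Real.log x)))

/-- `Tk λ k = exp(exp(λ^k))`. -/
noncomputable def Tk (l : ℝ) (k : ℕ) : ℝ := Real.exp (Real.exp (l ^ k))

/-- `sigmaT λ k = log log T_k / log T_k` where `T_k = exp(exp(λ^k))`. -/
noncomputable def sigmaT (l : ℝ) (k : ℕ) : ℝ :=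
  Real.log (Real.log (Tk l k)) / Real.log (Tk l k)

open Real Finset

section Probability

variable {Ω : Type*} [MeasurableSpace Ω] {μ : Measure Ω}

theorem measureReal_sum_ge_le_of_abs_le {ι : Type*} {X : ι → Ω → ℝ} (h_indep : iIndepFun X μ)
    (h_meas : ∀ i, AEMeasurable (X i) μ) {s : Finset ι} {c : ι → ℝ}
    (h_bound : ∀ i ∈ s, ∀ᵐ ω ∂μ, |X i ω| ≤ c i) (h_mean : ∀ i ∈ s, μ[X i] = 0)
    {x : ℝ} (hx : 0 ≤ x) :
    μ.real {ω | x ≤ ∑ i ∈ s, X i ω} ≤ exp (-x ^ 2 / (2 * ∑ i ∈ s, c i ^ 2)) := by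
  have := h_indep.isProbabilityMeasure
  have h_subG : ∀ i ∈ s, HasSubgaussianMGF (X i) ((‖c i - -c i‖₊ / 2) ^ 2) μ := fun i hi =>
    hasSubgaussianMGF_of_mem_Icc_of_integral_eq_zero (h_meas i)
      (by filter_upwards [h_bound i hi] with ω hω using abs_le.mp hω) (h_mean i hi)
  refine (HasSubgaussianMGF.measure_sum_ge_le_of_iIndepFun h_indep h_subG hx).trans_eq ?_
  congr 3
  push_cast
  refine sum_congr rfl fun i _ => ?_
  rw [sub_neg_eq_add, ← two_mul, norm_mul, Real.norm_two, mul_div_cancel_left₀ _ two_ne_zero,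
    Real.norm_eq_abs, sq_abs]

theorem ae_eventually_of_measureReal_compl_le [IsFiniteMeasure μ] {P : ℕ → Ω → Prop}
    {b : ℕ → ℝ} (hb : Summable b) (h : ∀ k, μ.real {ω | ¬ P k ω} ≤ b k) :
    ∀ᵐ ω ∂μ, ∀ᶠ k in atTop, P k ω := by
  have hsum : ∑' k, μ {ω | ¬ P k ω} ≠ ⊤ := by
    refine ne_top_of_le_ne_top (ENNReal.ofReal_ne_top (r := ∑' k, b k)) ?_
    rw [ENNReal.ofReal_tsum_of_nonneg (fun k => measureReal_nonneg.trans (h k)) hb]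
    refine ENNReal.tsum_le_tsum fun k => ?_
    rw [← ofReal_measureReal]
    exact ENNReal.ofReal_le_ofReal (h k)
  filter_upwards [ae_eventually_notMem hsum] with ω hω
  filter_upwards [hω] with k hk
  simpa using hk

end Probability

theorem integral_steinhausMeasure {g : ℂ → ℝ} (hg : Continuous g) :
    ∫ z, g z ∂steinhausMeasure =
      (2 * π)⁻¹ * ∫ θ in (0 : ℝ)..2 * π, g (Complex.exp (Complex.I * θ)) := by
  have hφ : Measurable fun θ : ℝ => Complex.exp (Complex.I * θ) := by fun_prop
  rw [steinhausMeasure, integral_map hφ.aemeasurable hg.aestronglyMeasurable,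
    integral_smul_measure, intervalIntegral.integral_of_le (by positivity),
    ENNReal.toReal_inv, ENNReal.toReal_ofReal (by positivity), smul_eq_mul]

theorem integral_cos_nat_mul_eq_zero {n : ℕ} (hn : n ≠ 0) :
    ∫ θ in (0 : ℝ)..2 * π, cos (n * θ) = 0 := by
  rw [intervalIntegral.integral_comp_mul_left cos (Nat.cast_ne_zero.mpr hn), integral_cos,
    mul_zero, sin_zero, show (n : ℝ) * (2 * π) = (2 * n : ℕ) * π by push_cast; ring,
    sin_nat_mul_pi, sub_zero, smul_zero]

theorem re_exp_I_mul_pow (θ : ℝ) (n : ℕ) :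
    (Complex.exp (Complex.I * θ) ^ n).re = cos (n * θ) := by
  rw [← Complex.exp_nat_mul, ← mul_assoc, mul_comm _ Complex.I, mul_assoc,
    mul_comm Complex.I, ← Complex.ofReal_natCast, ← Complex.ofReal_mul, Complex.exp_ofReal_mul_I_re]

theorem integral_steinhausMeasure_re_add_re_sq (a b : ℝ) :
    ∫ z, (a * z.re + b * (z ^ 2).re) ∂steinhausMeasure = 0 := by
  rw [integral_steinhausMeasure (by fun_prop)]
  have h (θ : ℝ) : a * (Complex.exp (Complex.I * θ)).re + b * (Complex.exp (Complex.I * θ) ^ 2).re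
      = a * cos ((1 : ℕ) * θ) + b * cos ((2 : ℕ) * θ) := by
    rw [← re_exp_I_mul_pow, ← re_exp_I_mul_pow, pow_one]
  simp_rw [h]
  rw [intervalIntegral.integral_add ((by fun_prop : Continuous _).intervalIntegrable _ _)
      ((by fun_prop : Continuous _).intervalIntegrable _ _),
    intervalIntegral.integral_const_mul, intervalIntegral.integral_const_mul,
    integral_cos_nat_mul_eq_zero one_ne_zero, integral_cos_nat_mul_eq_zero two_ne_zero]
  ring

namespace IsSteinhausRMF

variable {Ω : Type*} [MeasurableSpace Ω] {μ : Measure Ω} {f : Ω → ℕ → ℂ}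

theorem abs_re_add_re_sq_le (hf : IsSteinhausRMF μ f) (ω : Ω) {p : ℕ} (hp : p.Prime) (a b : ℝ) :
    |a * (f ω p).re + b * (f ω p ^ 2).re| ≤ |a| + |b| := by
  have hre : |(f ω p).re| ≤ 1 := (Complex.abs_re_le_norm _).trans (hf.norm_prime ω p hp).le
  have hre_sq : |(f ω p ^ 2).re| ≤ 1 :=
    (Complex.abs_re_le_norm _).trans (by rw [norm_pow, hf.norm_prime ω p hp, one_pow])
  calc |a * (f ω p).re + b * (f ω p ^ 2).re|
      ≤ |a| * |(f ω p).re| + |b| * |(f ω p ^ 2).re| := by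
        rw [← abs_mul, ← abs_mul]; exact abs_add_le _ _
    _ ≤ |a| + |b| := by
        nlinarith [abs_nonneg a, abs_nonneg b]

theorem integral_re_add_re_sq (hf : IsSteinhausRMF μ f) {p : ℕ} (hp : p.Prime) (a b : ℝ) :
    ∫ ω, (a * (f ω p).re + b * (f ω p ^ 2).re) ∂μ = 0 := by
  rw [← integral_map (hf.meas p).aemeasurable (by fun_prop : Continuous fun z : ℂ =>
      a * z.re + b * (z ^ 2).re).aestronglyMeasurable, hf.unif p hp,
    integral_steinhausMeasure_re_add_re_sq]

theorem measureReal_sum_ge_le (hf : IsSteinhausRMF μ f) (s : Finset ℕ) {a b c : ℕ → ℝ}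
    (hc : ∀ p ∈ s, p.Prime → |a p| + |b p| ≤ c p) {x : ℝ} (hx : 0 ≤ x) :
    μ.real {ω | x ≤ ∑ p ∈ s.filter Nat.Prime, (a p * (f ω p).re + b p * (f ω p ^ 2).re)} ≤
      exp (-x ^ 2 / (2 * ∑ p ∈ s.filter Nat.Prime, c p ^ 2)) := by
  set g : ℕ → ℂ → ℝ := fun p z => a p * z.re + b p * (z ^ 2).re
  have hg (p : ℕ) : Continuous (g p) := by fun_prop
  have h := measureReal_sum_ge_le_of_abs_le (s := s.subtype fun q => q.Prime) (c := fun q => c q)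
    (hf.indep.comp (fun q => g q) fun q => (hg q).measurable)
    (fun q => ((hg q).measurable.comp (hf.meas q)).aemeasurable)
    (fun q hq => ae_of_all _ fun ω => (hf.abs_re_add_re_sq_le ω q.2 _ _).trans
      (hc q (mem_subtype.mp hq) q.2))
    (fun q _ => hf.integral_re_add_re_sq q.2 _ _) hx
  have hsum (φ : ℕ → ℝ) : ∑ q ∈ s.subtype fun q => q.Prime, φ q = ∑ p ∈ s.filter Nat.Prime, φ p :=
    sum_subtype_eq_sum_filter φ
  simpa only [Function.comp_apply, fun ω => hsum fun p => g p (f ω p), hsum fun p => c p ^ 2]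
    using h

end IsSteinhausRMF

theorem sum_inv_primes_Ioc_two_pow_le {j : ℕ} (hj : 1 ≤ j) :
    ∑ p ∈ (Ioc (2 ^ j) (2 ^ (j + 1))).filter Nat.Prime, (1 : ℝ) / p ≤ 4 / j := by
  have hlog2 : 0 < log 2 := log_pos one_lt_two
  have hjlog : 0 < (j : ℝ) * log 2 := by positivity
  calc ∑ p ∈ (Ioc (2 ^ j) (2 ^ (j + 1))).filter Nat.Prime, (1 : ℝ) / p
      ≤ ∑ p ∈ (Ioc (2 ^ j) (2 ^ (j + 1))).filter Nat.Prime,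
          log p / ((2 : ℝ) ^ j * (j * log 2)) := by
        refine sum_le_sum fun p hp => ?_
        have hpj : (2 : ℝ) ^ j ≤ p := by
          exact_mod_cast (mem_Ioc.mp (mem_filter.mp hp).1).1.le
        have hlogp : (j : ℝ) * log 2 ≤ log p := by
          rw [← log_pow]; exact log_le_log (by positivity) hpj
        have hp0 : (0 : ℝ) < p := lt_of_lt_of_le (by positivity) hpj
        rw [div_le_div_iff₀ hp0 (by positivity), one_mul, mul_comm (log p)]
        exact mul_le_mul hpj hlogp hjlog.le hp0.le
    _ = (∑ p ∈ (Ioc (2 ^ j) (2 ^ (j + 1))).filter Nat.Prime, log p) /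
          ((2 : ℝ) ^ j * (j * log 2)) := by rw [sum_div]
    _ ≤ Chebyshev.theta ((2 : ℝ) ^ (j + 1)) / ((2 : ℝ) ^ j * (j * log 2)) := by
        gcongr
        refine sum_le_sum_of_subset_of_nonneg ?_ fun p _ _ => log_natCast_nonneg p
        rw [show ((2 : ℝ) ^ (j + 1)) = ((2 ^ (j + 1) : ℕ) : ℝ) by push_cast; rfl,
          Nat.floor_natCast]
        exact filter_subset_filter _ (Ioc_subset_Ioc_left (Nat.zero_le _))
    _ ≤ log 4 * (2 : ℝ) ^ (j + 1) / ((2 : ℝ) ^ j * (j * log 2)) := by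
        gcongr; exact Chebyshev.theta_le_log4_mul_x (by positivity)
    _ = 4 / j := by
        rw [show (4 : ℝ) = 2 ^ 2 by norm_num, log_pow]
        field_simp
        ring

theorem sum_inv_primes_le_harmonic (J : ℕ) :
    ∑ p ∈ (Icc 1 (2 ^ (J + 1))).filter Nat.Prime, (1 : ℝ) / p ≤ 1 / 2 + 4 * harmonic J := by
  induction J with
  | zero => rw [show (Icc 1 (2 ^ 1)).filter Nat.Prime = {2} by decide]; norm_num
  | succ J ih =>
    have hsplit : Icc 1 (2 ^ (J + 2)) = Icc 1 (2 ^ (J + 1)) ∪ Ioc (2 ^ (J + 1)) (2 ^ (J + 2)) := by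
      have h1 : 2 ^ (J + 1) = 2 * 2 ^ J := by ring
      have h2 : 2 ^ (J + 2) = 4 * 2 ^ J := by ring
      ext p; simp only [mem_Icc, mem_Ioc, mem_union]; omega
    have hdisj : Disjoint (Icc 1 (2 ^ (J + 1))) (Ioc (2 ^ (J + 1)) (2 ^ (J + 2))) :=
      disjoint_left.mpr fun p hp hq => (mem_Icc.mp hp).2.not_gt (mem_Ioc.mp hq).1
    rw [hsplit, filter_union, sum_union (disjoint_filter_filter hdisj), harmonic_succ]
    have hblock := sum_inv_primes_Ioc_two_pow_le (j := J + 1) le_add_self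
    push_cast at hblock ⊢
    rw [div_eq_mul_inv] at hblock
    linarith

theorem sum_inv_primes_le_log_log {x : ℝ} (hx : 2 ≤ x) :
    ∑ p ∈ (Icc 1 ⌊x⌋₊).filter Nat.Prime, (1 : ℝ) / p ≤ 9 + 4 * log (log x) := by
  set J := Nat.log 2 ⌊x⌋₊
  have hN : 2 ≤ ⌊x⌋₊ := Nat.le_floor (by exact_mod_cast hx)
  have hJ : 1 ≤ J := Nat.le_log_of_pow_le one_lt_two (by simpa using hN)
  have hlog2 : 1 / 2 < log 2 := by linarith [log_two_gt_d9]
  have hlogx : 0 < log x := log_pos (by linarith)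
  have hJx : (J : ℝ) ≤ 2 * log x := by
    have h2J : (2 : ℝ) ^ J ≤ x :=
      (by exact_mod_cast Nat.pow_log_le_self 2 (by omega) : (2 : ℝ) ^ J ≤ ⌊x⌋₊).trans
        (Nat.floor_le (by linarith))
    have := log_le_log (by positivity) h2J
    rw [log_pow] at this
    nlinarith
  have hlogJ : log J ≤ 1 + log (log x) := by
    calc log J ≤ log (2 * log x) := log_le_log (by exact_mod_cast hJ) hJx
      _ = log 2 + log (log x) := log_mul two_ne_zero hlogx.ne'
      _ ≤ 1 + log (log x) := by linarith [log_two_lt_d9]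
  calc ∑ p ∈ (Icc 1 ⌊x⌋₊).filter Nat.Prime, (1 : ℝ) / p
      ≤ ∑ p ∈ (Icc 1 (2 ^ (J + 1))).filter Nat.Prime, (1 : ℝ) / p :=
        sum_le_sum_of_subset_of_nonneg
          (filter_subset_filter _ (Icc_subset_Icc_right (Nat.lt_pow_succ_log_self one_lt_two _).le))
          fun p _ _ => by positivity
    _ ≤ 1 / 2 + 4 * harmonic J := sum_inv_primes_le_harmonic J
    _ ≤ 1 / 2 + 4 * (1 + log J) := by gcongr; exact harmonic_le_one_add_log J
    _ ≤ 9 + 4 * log (log x) := by linarith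

theorem sum_inv_primes_pos {x : ℝ} (hx : 2 ≤ x) :
    0 < ∑ p ∈ (Icc 1 ⌊x⌋₊).filter Nat.Prime, (1 : ℝ) / p := by
  refine sum_pos (fun p hp => ?_) ⟨2, ?_⟩
  · have := (mem_filter.mp hp).2.pos
    positivity
  · exact mem_filter.mpr ⟨mem_Icc.mpr ⟨one_le_two, Nat.le_floor (by exact_mod_cast hx)⟩,
      Nat.prime_two⟩

theorem log_Tk (l : ℝ) (k : ℕ) : log (Tk l k) = exp (l ^ k) := log_exp _

theorem llog_Tk (l : ℝ) (k : ℕ) : llog (Tk l k) = l ^ k := by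
  rw [llog, log_Tk, log_exp]

theorem llllog_Tk_succ (l : ℝ) (k : ℕ) :
    llllog (Tk l (k + 1)) = log ((k + 1) * log l) := by
  rw [llllog, log_Tk, log_exp, log_pow]
  push_cast
  rfl

theorem two_le_Tk {l : ℝ} (hl : 0 ≤ l) (k : ℕ) : 2 ≤ Tk l k :=
  calc (2 : ℝ) ≤ exp 1 := by linarith [add_one_le_exp (1 : ℝ)]
    _ ≤ Tk l k := exp_le_exp.mpr (one_le_exp (by positivity))

theorem sigmaT_nonneg {l : ℝ} (hl : 0 ≤ l) (k : ℕ) : 0 ≤ sigmaT l k := by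
  rw [sigmaT, ← llog, llog_Tk, log_Tk]
  positivity

theorem abs_sin_coeff_add_abs_rpow_coeff_le {L σ p : ℝ} (hL : 0 < L) (hσ : 0 ≤ σ) (hp : 1 < p) :
    |2 * L * sin (log p / (2 * L)) / (p ^ (1 / 2 + σ) * log p)| + |1 / (2 * p ^ (1 + 2 * σ))| ≤
      3 / (2 * √p) := by
  have hp0 : 0 < p := by linarith
  have hlogp : 0 < log p := log_pos hp
  have hsqrt : 0 < √p := sqrt_pos.mpr (by linarith)
  have hsin : |sin (log p / (2 * L))| ≤ log p / (2 * L) :=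
    abs_sin_le_abs.trans_eq (abs_of_pos (by positivity))
  have hrpow {e : ℝ} (he : 1 / 2 ≤ e) : √p ≤ p ^ e := by
    rw [sqrt_eq_rpow]; exact rpow_le_rpow_of_exponent_le hp.le he
  rw [abs_of_pos (by positivity : 0 < 1 / (2 * p ^ (1 + 2 * σ))), abs_div, abs_mul,
    abs_of_pos (by positivity : 0 < 2 * L),
    abs_of_pos (by positivity : 0 < p ^ (1 / 2 + σ) * log p)]
  calc 2 * L * |sin (log p / (2 * L))| / (p ^ (1 / 2 + σ) * log p) + 1 / (2 * p ^ (1 + 2 * σ))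
      ≤ 2 * L * (log p / (2 * L)) / (√p * log p) + 1 / (2 * √p) := by
        gcongr
        exacts [hrpow (by linarith), hrpow (by linarith)]
    _ = 3 / (2 * √p) := by field_simp; ring

theorem sum_sq_three_div_two_sqrt (s : Finset ℕ) :
    ∑ p ∈ s, (3 / (2 * √p)) ^ 2 = 9 / 4 * ∑ p ∈ s, (1 : ℝ) / p := by
  rw [mul_sum]
  refine sum_congr rfl fun p _ => ?_
  rw [div_pow, mul_pow, sq_sqrt (Nat.cast_nonneg p)]
  ring

theorem exp_neg_sq_div_le_inv_sq {ε l V : ℝ} {k : ℕ} (hl : 3 ≤ l) (hεl : 120 ≤ ε ^ 2 * l)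
    (hV : 0 < V) (hVl : V ≤ 9 / 4 * (9 + 4 * l ^ k)) :
    exp (-(ε * √(llog (Tk l (k + 1)) * llllog (Tk l (k + 1)))) ^ 2 / (2 * V)) ≤
      1 / ((k : ℝ) + 1) ^ 2 := by
  have hlogl : 1 ≤ log l := by
    rw [le_log_iff_exp_le (by linarith)]; linarith [exp_one_lt_d9]
  have hk : log ((k : ℝ) + 1) ≤ log ((k + 1) * log l) :=
    log_le_log (by positivity) (le_mul_of_one_le_right (by positivity) hlogl)
  have hk0 : 0 ≤ log ((k : ℝ) + 1) := log_nonneg (by linarith [k.cast_nonneg (α := ℝ)])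
  set G := log ((k + 1) * log l)
  have hG : 0 ≤ G := hk0.trans hk
  rw [llog_Tk, llllog_Tk_succ, mul_pow, sq_sqrt (by positivity)]
  calc exp (-(ε ^ 2 * (l ^ (k + 1) * G)) / (2 * V))
      ≤ exp (-(2 * log ((k : ℝ) + 1))) := by
        rw [exp_le_exp, neg_div, neg_le_neg_iff, le_div_iff₀ (by positivity)]
        have hVl' : V ≤ 30 * l ^ k := by nlinarith [one_le_pow₀ (by linarith : 1 ≤ l) (n := k)]
        calc 2 * log ((k : ℝ) + 1) * (2 * V) ≤ 2 * G * (2 * (30 * l ^ k)) := by gcongr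
          _ = 120 * G * l ^ k := by ring
          _ ≤ ε ^ 2 * l * G * l ^ k := by gcongr
          _ = ε ^ 2 * (l ^ (k + 1) * G) := by ring
    _ = 1 / ((k : ℝ) + 1) ^ 2 := by
        rw [show 2 * log ((k : ℝ) + 1) = log (((k : ℝ) + 1) ^ 2) by rw [log_pow]; norm_num,
          exp_neg, exp_log (by positivity), one_div]

/-- For any `ε > 0` there exists `λ₀ > 1` such that for every `λ ≥ λ₀`: with
`T_k = exp(exp(λ^k))` and `σ_k = log log T_k / log T_k`, almost surely for all
sufficiently large `k` one has
`∑_{p ≤ T_{k-1}} [2 Re f(p) (log T_k) sin(log p/(2 log T_k)) / (p^{1/2+σ_k} log p)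
  + Re(f(p)²)/(2 p^{1+2σ_k})] ≤ ε √(log₂ T_k log₄ T_k)` (stated with `k-1, k`
replaced by `k, k+1`). -/
theorem steinhaus_prime_sum_initial_segment_small {Ω : Type*} [MeasurableSpace Ω]
    (μ : Measure Ω) [IsProbabilityMeasure μ] (f : Ω → ℕ → ℂ)
    (hf : IsSteinhausRMF μ f) (ε : ℝ) (hε : 0 < ε) :
    ∃ l₀ : ℝ, 1 < l₀ ∧ ∀ l : ℝ, l₀ ≤ l →
      ∀ᵐ ω ∂μ, ∀ᶠ k : ℕ in atTop,
        ∑ p ∈ (Finset.Icc 1 ⌊Tk l k⌋₊).filter Nat.Prime,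
            (2 * (f ω p).re * Real.log (Tk l (k + 1)) *
                Real.sin (Real.log p / (2 * Real.log (Tk l (k + 1)))) /
                ((p : ℝ) ^ ((1 : ℝ) / 2 + sigmaT l (k + 1)) * Real.log p) +
              ((f ω p) ^ 2).re / (2 * (p : ℝ) ^ (1 + 2 * sigmaT l (k + 1)))) ≤
          ε * Real.sqrt (llog (Tk l (k + 1)) * llllog (Tk l (k + 1))) := by
  refine ⟨max 3 (120 / ε ^ 2), (by norm_num : (1 : ℝ) < 3).trans_le (le_max_left _ _),
    fun l hl => ?_⟩
  have hl3 : 3 ≤ l := (le_max_left _ _).trans hl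
  have hεl : 120 ≤ ε ^ 2 * l := by
    rw [← div_le_iff₀' (by positivity)]; exact (le_max_right _ _).trans hl
  refine ae_eventually_of_measureReal_compl_le (b := fun k : ℕ => 1 / ((k : ℝ) + 1) ^ 2)
    (by simpa using (summable_nat_add_iff 1).mpr (summable_one_div_nat_pow.mpr one_lt_two))
    fun k => ?_
  set L := log (Tk l (k + 1))
  set σ := sigmaT l (k + 1)
  set s := (Icc 1 ⌊Tk l k⌋₊).filter Nat.Prime
  have hTk : 2 ≤ Tk l k := two_le_Tk (by linarith) k
  have hS : ∑ p ∈ s, (1 : ℝ) / p ≤ 9 + 4 * l ^ k := by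
    have := sum_inv_primes_le_log_log hTk
    rwa [← llog, llog_Tk] at this
  calc μ.real {ω | ¬ ∑ p ∈ s, _ ≤ _}
      ≤ μ.real {ω | ε * √(llog (Tk l (k + 1)) * llllog (Tk l (k + 1))) ≤
          ∑ p ∈ s, (2 * L * sin (log p / (2 * L)) / ((p : ℝ) ^ (1 / 2 + σ) * log p) * (f ω p).re +
            1 / (2 * (p : ℝ) ^ (1 + 2 * σ)) * (f ω p ^ 2).re)} :=
        measureReal_mono fun ω hω =>
          ((not_le.mp hω).trans_eq (sum_congr rfl fun p _ => by ring)).le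
    _ ≤ exp (-(ε * √(llog (Tk l (k + 1)) * llllog (Tk l (k + 1)))) ^ 2 /
          (2 * ∑ p ∈ s, (3 / (2 * √p)) ^ 2)) :=
        hf.measureReal_sum_ge_le _ (fun p _ hp => abs_sin_coeff_add_abs_rpow_coeff_le
          ((exp_pos _).trans_eq (log_Tk l (k + 1)).symm) (sigmaT_nonneg (by linarith) _)
          (by exact_mod_cast hp.one_lt)) (by positivity)
    _ ≤ 1 / ((k : ℝ) + 1) ^ 2 := by
        rw [sum_sq_three_div_two_sqrt]
        exact exp_neg_sq_div_le_inv_sq hl3 hεl (by positivity [sum_inv_primes_pos hTk])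
          (by gcongr)
end
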